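/- arXiv:2203.12400 — 5 statements merged into one kernel-verified Lean document; each statement's English description precedes it below -/
import Mathlib

section
/- Let n ≥ 1 and let x : [n] → ℕ be a load vector with Σ_{i=1}^n x_i = m ≥ 1. Let κ := |{i ∈ [n] : x_i > 0}| and F := n − κ. Let Z_1, …, Z_κ be independent random variables, each uniformly distributed on [n], and define x'_i := x_i − 1_{x_i > 0} + Σ_{j=1}^{κ} 1_{Z_j = i} for each i ∈ [n]. Then E[Σ_{i=1}^n (x'_i)²] ≤ Σ_{i=1}^n (x_i)² − 2·(m/n)·F + 2n. -/
/-!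
Write `x'ᵢ = yᵢ + Cᵢ` with `yᵢ = xᵢ - 1_{xᵢ > 0}` and `Cᵢ` the number of the `κ` re-allocated
balls landing in bin `i`. Since `Cᵢ` is a sum of `κ` pairwise independent indicators of
probability `1/n`, `E Cᵢ = κ/n` and `E Cᵢ² = E #{(j, k) | Zⱼ = Zₖ = i} = κ/n + κ(κ-1)/n²`.
Expanding the square gives `E Σ x'ᵢ² = Σ xᵢ² - 2m + 2κ + 2(m - κ)κ/n + κ(κ-1)/n`, which falls
short of the bound by `2(n - κ) + κ(κ+1)/n ≥ 0`.
-/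

open MeasureTheory ProbabilityTheory Finset
open scoped ENNReal

/-- The number of non-empty bins of a load vector. -/
def kappa {n : ℕ} (x : Fin n → ℕ) : ℕ := (Finset.univ.filter fun i => 0 < x i).card

section Counting

variable {Ω τ : Type*} [Fintype τ] {E : τ → Ω → Prop} [∀ t ω, Decidable (E t ω)]

lemma natCast_card_filter_eq_sum_indicator (ω : Ω) :
    (#{t | E t ω} : ℝ) = ∑ t, {ω | E t ω}.indicator 1 ω := by
  rw [natCast_card_filter]
  simp only [Set.indicator_apply, Set.mem_ofPred_eq, Pi.one_apply]

lemma sq_card_filter (ω : Ω) : #{t | E t ω} ^ 2 = #{p : τ × τ | E p.1 ω ∧ E p.2 ω} := by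
  rw [sq, ← card_product, ← filter_product, univ_product_univ]

variable [MeasurableSpace Ω] {P : Measure Ω} [IsFiniteMeasure P]
  (hE : ∀ t, MeasurableSet {ω | E t ω})
include hE

lemma integrable_card_filter : Integrable (fun ω => (#{t | E t ω} : ℝ)) P := by
  simp_rw [natCast_card_filter_eq_sum_indicator]
  exact integrable_finsetSum _ fun t _ => (integrable_const 1).indicator (hE t)

lemma integral_card_filter : ∫ ω, (#{t | E t ω} : ℝ) ∂P = ∑ t, P.real {ω | E t ω} := by
  simp_rw [natCast_card_filter_eq_sum_indicator]
  rw [integral_finsetSum _ fun t _ => (integrable_const 1).indicator (hE t)]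
  simp_rw [integral_indicator_one (hE _)]

end Counting

section Hits

variable {Ω ι α : Type*} [MeasurableSpace Ω] [MeasurableSpace α] [MeasurableSingletonClass α]
  {Z : ι → Ω → α} (hZ : ∀ j, Measurable (Z j))
include hZ

lemma measurableSet_hit (a : α) (j : ι) : MeasurableSet {ω | Z j ω = a} :=
  hZ j (measurableSet_singleton a)

lemma measurableSet_hit_pair (a : α) (p : ι × ι) :
    MeasurableSet {ω | Z p.1 ω = a ∧ Z p.2 ω = a} :=
  (measurableSet_hit hZ a p.1).inter (measurableSet_hit hZ a p.2)

variable {P : Measure Ω} [IsFiniteMeasure P] [Fintype ι] [DecidableEq α] (a : α)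

lemma integrable_card_hits : Integrable (fun ω => (#{j | Z j ω = a} : ℝ)) P :=
  integrable_card_filter (measurableSet_hit hZ a)

lemma integrable_card_hits_sq : Integrable (fun ω => (#{j | Z j ω = a} : ℝ) ^ 2) P := by
  simp_rw [← Nat.cast_pow, sq_card_filter]
  exact integrable_card_filter (measurableSet_hit_pair hZ a)

lemma integral_card_hits {p : ℝ} (hp : ∀ j, P.real {ω | Z j ω = a} = p) :
    ∫ ω, (#{j | Z j ω = a} : ℝ) ∂P = Fintype.card ι * p := by
  simp [integral_card_filter (measurableSet_hit hZ a), hp]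

lemma integral_card_hits_sq (hindep : Pairwise fun j k => IndepFun (Z j) (Z k) P) {p : ℝ}
    (hp : ∀ j, P.real {ω | Z j ω = a} = p) :
    ∫ ω, (#{j | Z j ω = a} : ℝ) ^ 2 ∂P
      = Fintype.card ι * p + Fintype.card ι * (Fintype.card ι - 1) * p ^ 2 := by
  classical
  have hpair : ∀ j k,
      P.real {ω | Z j ω = a ∧ Z k ω = a} = p ^ 2 + if j = k then p - p ^ 2 else 0 := by
    intro j k
    rcases eq_or_ne j k with rfl | hjk
    · simp [hp]
    · have := (hindep hjk).measure_inter_preimage_eq_mul {a} {a}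
        (measurableSet_singleton a) (measurableSet_singleton a)
      simp only [measureReal_def, Set.preimage, Set.mem_singleton_iff] at this hp
      simp [measureReal_def, Set.ofPred_and, this, ENNReal.toReal_mul, hp, hjk, sq]
  simp_rw [← Nat.cast_pow, sq_card_filter]
  rw [integral_card_filter (measurableSet_hit_pair hZ a)]
  simp only [Fintype.sum_prod_type, hpair, sum_add_distrib, sum_ite_eq, mem_univ, if_true,
    sum_const, card_univ, nsmul_eq_mul, Fintype.card_prod, Nat.cast_mul]
  ring

end Hits

lemma integral_sum_const_add_sq {Ω β : Type*} [MeasurableSpace Ω] {P : Measure Ω}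
    [IsProbabilityMeasure P] [Fintype β] (c : β → ℝ) {f : β → Ω → ℝ}
    (hf : ∀ b, Integrable (f b) P) (hf2 : ∀ b, Integrable (fun ω => f b ω ^ 2) P) :
    ∫ ω, ∑ b, (c b + f b ω) ^ 2 ∂P
      = ∑ b, (c b ^ 2 + 2 * c b * ∫ ω, f b ω ∂P + ∫ ω, f b ω ^ 2 ∂P) := by
  have hexp : ∀ b ω, (c b + f b ω) ^ 2 = c b ^ 2 + 2 * c b * f b ω + f b ω ^ 2 :=
    fun _ _ => by ring
  have hlin : ∀ b, Integrable (fun ω => c b ^ 2 + 2 * c b * f b ω) P :=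
    fun b => (integrable_const _).add ((hf b).const_mul _)
  have hsq : ∀ b, Integrable (fun ω => c b ^ 2 + 2 * c b * f b ω + f b ω ^ 2) P :=
    fun b => (hlin b).add (hf2 b)
  simp_rw [hexp]
  rw [integral_finsetSum _ fun b _ => hsq b]
  refine sum_congr rfl fun b _ => ?_
  rw [integral_add (hlin b) (hf2 b), integral_add (integrable_const _) ((hf b).const_mul _),
    integral_const, integral_const_mul]
  simp

section Loads

variable {ι : Type*} [Fintype ι] (x : ι → ℕ)

lemma natCast_sub_ite_pos (k : ℕ) :
    ((k - if 0 < k then 1 else 0 : ℕ) : ℝ) = k - if 0 < k then 1 else 0 := by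
  split_ifs with h
  · rw [Nat.cast_sub h, Nat.cast_one]
  · simp

lemma sum_natCast_sub_ite_pos :
    ∑ i, ((x i - if 0 < x i then 1 else 0 : ℕ) : ℝ) = ∑ i, (x i : ℝ) - #{i | 0 < x i} := by
  simp [natCast_sub_ite_pos, sum_sub_distrib, sum_boole]

lemma sum_natCast_sub_ite_pos_sq :
    ∑ i, ((x i - if 0 < x i then 1 else 0 : ℕ) : ℝ) ^ 2
      = ∑ i, (x i : ℝ) ^ 2 - 2 * ∑ i, (x i : ℝ) + #{i | 0 < x i} := by
  have h : ∀ k : ℕ, ((k - if 0 < k then 1 else 0 : ℕ) : ℝ) ^ 2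
      = (k : ℝ) ^ 2 - 2 * k + if 0 < k then 1 else 0 := by
    intro k
    rcases k.eq_zero_or_pos with rfl | hk
    · simp
    · rw [natCast_sub_ite_pos, if_pos hk]; ring
  simp [h, sum_add_distrib, sum_sub_distrib, mul_sum, sum_boole]

end Loads

theorem rbb_quadratic_potential_drop_general
    (n m : ℕ) (hn : 1 ≤ n)
    (x : Fin n → ℕ) (hx : (∑ i, x i) = m)
    (Ω : Type) [MeasurableSpace Ω] (P : Measure Ω) [IsProbabilityMeasure P]
    (Z : Fin (kappa x) → Ω → Fin n)
    (hmeas : ∀ j, Measurable (Z j))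
    (hindep : iIndepFun Z P)
    (hunif : ∀ j i, P {ω | Z j ω = i} = (n : ℝ≥0∞)⁻¹) :
    (∫ ω, (∑ i, ((x i - (if 0 < x i then 1 else 0)
        + (Finset.univ.filter fun j => Z j ω = i).card : ℕ) : ℝ) ^ 2) ∂P)
      ≤ (∑ i, (x i : ℝ) ^ 2) - 2 * ((m : ℝ) / n) * ((n - kappa x : ℕ) : ℝ) + 2 * n := by
  have hnr : (n : ℝ) * (n : ℝ)⁻¹ = 1 := mul_inv_cancel₀ (by positivity)
  have hκn : kappa x ≤ n := by simpa [kappa] using card_filter_le univ fun i => 0 < x i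
  have hp : ∀ j i, P.real {ω | Z j ω = i} = (n : ℝ)⁻¹ := fun j i => by
    simp [measureReal_def, hunif]
  simp only [Nat.cast_add]
  rw [integral_sum_const_add_sq _ (integrable_card_hits hmeas) (integrable_card_hits_sq hmeas)]
  simp only [integral_card_hits hmeas _ (hp · _),
    integral_card_hits_sq hmeas _ (fun _ _ h => hindep.indepFun h) (hp · _), Fintype.card_fin]
  have hκ : (#{i | 0 < x i} : ℝ) = kappa x := rfl
  rw [sum_add_distrib, sum_add_distrib, sum_natCast_sub_ite_pos_sq, ← sum_mul, ← mul_sum,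
    sum_natCast_sub_ite_pos, sum_const, card_univ, Fintype.card_fin, nsmul_eq_mul, hκ,
    ← Nat.cast_sum, hx, Nat.cast_sub hκn, div_eq_mul_inv]
  have hκn' : (kappa x : ℝ) ≤ n := by exact_mod_cast hκn
  have hpos : 0 ≤ (kappa x : ℝ) * (kappa x + 1) * (n : ℝ)⁻¹ := by positivity
  linear_combination
    2 * hκn' + hpos + (2 * m + kappa x + kappa x * (kappa x - 1) * (n : ℝ)⁻¹) * hnr

/-- **Lemma 3.1 (quadratic potential drop).** Let `x : [n] → ℕ` be a load vector
with `m ≥ 1` balls, `κ` non-empty bins and `F = n - κ` empty bins. If one ball is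
removed from each non-empty bin and re-allocated to a bin chosen independently and
uniformly at random, then the expected quadratic potential after the round is at most
`Υ - 2·(m/n)·F + 2n`. -/
theorem rbb_quadratic_potential_drop
    (n m : ℕ) (hn : 1 ≤ n) (hm : 1 ≤ m)
    (x : Fin n → ℕ) (hx : (∑ i, x i) = m)
    (Ω : Type) [MeasurableSpace Ω] (P : Measure Ω) [IsProbabilityMeasure P]
    (Z : Fin (kappa x) → Ω → Fin n)
    (hmeas : ∀ j, Measurable (Z j))
    (hindep : iIndepFun Z P)
    (hunif : ∀ j i, P {ω | Z j ω = i} = (n : ℝ≥0∞)⁻¹) :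
    (∫ ω, (∑ i, ((x i - (if 0 < x i then 1 else 0)
        + (Finset.univ.filter fun j => Z j ω = i).card : ℕ) : ℝ) ^ 2) ∂P)
      ≤ (∑ i, (x i : ℝ) ^ 2) - 2 * ((m : ℝ) / n) * ((n - kappa x : ℕ) : ℝ) + 2 * n :=
  rbb_quadratic_potential_drop_general n m hn x hx Ω P Z hmeas hindep hunif
end

section
/- Let n ≥ 1, m ≥ n, and let x : [n] → ℕ be a load vector with Σ_{i=1}^n x_i = m. Let κ := |{i ∈ [n] : x_i > 0}|. Let Z_1, …, Z_κ be independent random variables, each uniformly distributed on [n], and define x'_i := x_i − 1_{x_i > 0} + Σ_{j=1}^{κ} 1_{Z_j = i} for each i ∈ [n]. Then for any α > 0, E[Σ_{i=1}^n e^{α x'_i}] ≤ (Σ_{i=1}^n e^{α x_i}) · e^{−α} · e^{((e^α − 1)/n)·κ} + (n − κ) · e^{((e^α − 1)/n)·κ}. -/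
open MeasureTheory ProbabilityTheory Finset
open scoped ENNReal

lemma natCast_card_filter_eq_sum_indicator_s5 {Ω ι β : Type*} [Fintype ι] [DecidableEq β]
    (Z : ι → Ω → β) (b : β) :
    (fun ω => (#{j | Z j ω = b} : ℝ)) = ∑ j, {ω | Z j ω = b}.indicator 1 := by
  ext ω
  simp [Finset.sum_apply, Set.indicator_apply]

namespace ProbabilityTheory

variable {Ω : Type*} [MeasurableSpace Ω] {P : Measure Ω}

lemma mgf_indicator_one [IsProbabilityMeasure P] {s : Set Ω} (hs : MeasurableSet s) (t : ℝ) :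
    mgf (s.indicator 1) P t = 1 + (Real.exp t - 1) * P.real s := by
  have h : (fun ω => Real.exp (t * s.indicator 1 ω))
      = fun ω => 1 + s.indicator (fun _ => Real.exp t - 1) ω := by
    ext ω
    by_cases hω : ω ∈ s <;> simp [hω]
  rw [mgf, h, integral_add (integrable_const 1) ((integrable_const _).indicator hs),
    integral_const, integral_indicator_const _ hs]
  simp [mul_comm]

variable {ι β : Type*} [Fintype ι] [MeasurableSpace β] [MeasurableSingletonClass β]
  [DecidableEq β] {Z : ι → Ω → β}

lemma integrable_exp_mul_card_filter [IsFiniteMeasure P] (hmeas : ∀ j, Measurable (Z j))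
    (b : β) (t : ℝ) : Integrable (fun ω => Real.exp (t * #{j | Z j ω = b})) P := by
  refine integrable_exp_mul_of_mem_Icc (a := 0) (b := Fintype.card ι) ?_ (.of_forall fun ω => ?_)
  · rw [natCast_card_filter_eq_sum_indicator_s5]
    exact Finset.aemeasurable_sum _ fun j _ =>
      (measurable_one.indicator (hmeas j (measurableSet_singleton b))).aemeasurable
  · exact ⟨Nat.cast_nonneg' _, Nat.cast_le.2 (card_le_univ _)⟩

lemma iIndepFun.mgf_card_filter_eq (hmeas : ∀ j, Measurable (Z j)) (hindep : iIndepFun Z P)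
    (b : β) (t : ℝ) :
    mgf (fun ω => (#{j | Z j ω = b} : ℝ)) P t
      = ∏ j, (1 + (Real.exp t - 1) * P.real {ω | Z j ω = b}) := by
  have : IsProbabilityMeasure P := hindep.isProbabilityMeasure
  have hs : ∀ j, MeasurableSet {ω | Z j ω = b} := fun j => hmeas j (measurableSet_singleton b)
  have hind : iIndepFun (fun j => {ω | Z j ω = b}.indicator (1 : Ω → ℝ)) P :=
    hindep.comp (fun _ => ({b} : Set β).indicator 1)
      fun _ => measurable_one.indicator (measurableSet_singleton b)
  rw [natCast_card_filter_eq_sum_indicator_s5, hind.mgf_sum fun j => measurable_one.indicator (hs j)]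
  simp_rw [mgf_indicator_one (hs _)]

end ProbabilityTheory

lemma one_add_pow_le_exp_mul {t : ℝ} (ht : 0 ≤ 1 + t) (k : ℕ) :
    (1 + t) ^ k ≤ Real.exp (t * k) := by
  calc (1 + t) ^ k ≤ Real.exp t ^ k := pow_le_pow_left₀ ht (by linarith [Real.add_one_le_exp t]) _
    _ = Real.exp (t * k) := by rw [← Real.exp_nat_mul, mul_comm]

lemma sum_exp_mul_sub_indicator_pos_le {n : ℕ} (x : Fin n → ℕ) (α : ℝ) :
    ∑ i, Real.exp (α * ((x i - if 0 < x i then 1 else 0 : ℕ) : ℝ))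
      ≤ (∑ i, Real.exp (α * x i)) * Real.exp (-α) + ((n - kappa x : ℕ) : ℝ) := by
  have hempty : #{i | ¬0 < x i} = n - kappa x := by
    have := card_filter_add_card_filter_not (s := univ) (p := fun i => 0 < x i)
    rw [card_univ, Fintype.card_fin] at this
    rw [kappa]
    omega
  rw [← sum_filter_add_sum_filter_not univ (fun i => 0 < x i)]
  gcongr ?_ + ?_
  · rw [sum_mul]
    calc ∑ i with 0 < x i, Real.exp (α * ((x i - if 0 < x i then 1 else 0 : ℕ) : ℝ))
        = ∑ i with 0 < x i, Real.exp (α * x i) * Real.exp (-α) := by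
          refine sum_congr rfl fun i hi => ?_
          rw [if_pos (mem_filter.1 hi).2, Nat.cast_sub (mem_filter.1 hi).2, ← Real.exp_add]
          ring_nf
      _ ≤ ∑ i, Real.exp (α * x i) * Real.exp (-α) :=
          sum_le_sum_of_subset_of_nonneg (filter_subset _ _) fun _ _ _ => by positivity
  · rw [← hempty, card_eq_sum_ones, Nat.cast_sum]
    refine (sum_congr rfl fun i hi => ?_).le
    simp [Nat.pos_iff_ne_zero.not_left.mp (mem_filter.1 hi).2]

theorem rbb_exp_potential_one_round_general
    (n : ℕ)
    (x : Fin n → ℕ)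
    (Ω : Type) [MeasurableSpace Ω] (P : Measure Ω) [IsProbabilityMeasure P]
    (Z : Fin (kappa x) → Ω → Fin n)
    (hmeas : ∀ j, Measurable (Z j))
    (hindep : iIndepFun Z P)
    (hunif : ∀ j i, P {ω | Z j ω = i} = (n : ℝ≥0∞)⁻¹)
    (α : ℝ) :
    (∫ ω, (∑ i, Real.exp (α * ((x i - (if 0 < x i then 1 else 0)
        + (Finset.univ.filter fun j => Z j ω = i).card : ℕ) : ℝ))) ∂P)
      ≤ (∑ i, Real.exp (α * (x i : ℝ))) * Real.exp (-α)
          * Real.exp ((Real.exp α - 1) / n * (kappa x : ℝ))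
        + ((n - kappa x : ℕ) : ℝ) * Real.exp ((Real.exp α - 1) / n * (kappa x : ℝ)) := by
  set M := 1 + (Real.exp α - 1) / n
  have hsplit : ∀ i ω, Real.exp (α * ((x i - (if 0 < x i then 1 else 0) + #{j | Z j ω = i} : ℕ) : ℝ))
      = Real.exp (α * ((x i - if 0 < x i then 1 else 0 : ℕ) : ℝ))
        * Real.exp (α * #{j | Z j ω = i}) := by
    intro i ω
    rw [Nat.cast_add, mul_add, Real.exp_add]
  have hbin : ∀ i, ∫ ω, Real.exp (α * ((x i - (if 0 < x i then 1 else 0)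
      + #{j | Z j ω = i} : ℕ) : ℝ)) ∂P
      = Real.exp (α * ((x i - if 0 < x i then 1 else 0 : ℕ) : ℝ)) * M ^ kappa x := by
    intro i
    simp_rw [hsplit i, integral_const_mul]
    rw [← mgf, hindep.mgf_card_filter_eq hmeas]
    simp [measureReal_def, hunif, M, div_eq_mul_inv]
  have hM : M ^ kappa x ≤ Real.exp ((Real.exp α - 1) / n * kappa x) := by
    refine one_add_pow_le_exp_mul ?_ _
    rw [sub_div, one_div]
    linarith [Nat.cast_inv_le_one (α := ℝ) n, div_nonneg (Real.exp_pos α).le (Nat.cast_nonneg' n)]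
  calc _ = ∑ i, ∫ ω, Real.exp (α * ((x i - (if 0 < x i then 1 else 0)
          + #{j | Z j ω = i} : ℕ) : ℝ)) ∂P :=
        integral_finsetSum _ fun i _ =>
          ((integrable_exp_mul_card_filter hmeas i α).const_mul _).congr
            (.of_forall fun ω => (hsplit i ω).symm)
    _ = ∑ i, Real.exp (α * ((x i - if 0 < x i then 1 else 0 : ℕ) : ℝ)) * M ^ kappa x :=
        sum_congr rfl fun i _ => hbin i
    _ ≤ (∑ i, Real.exp (α * ((x i - if 0 < x i then 1 else 0 : ℕ) : ℝ)))
          * Real.exp ((Real.exp α - 1) / n * kappa x) := by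
        rw [sum_mul]
        gcongr
    _ ≤ _ := by
        rw [← add_mul]
        gcongr
        exact sum_exp_mul_sub_indicator_pos_le x α

/-- **Lemma 4.1 (exponential potential, one round).** Let `x : [n] → ℕ` be a load vector
with `m ≥ n` balls and `κ` non-empty bins. If one ball is removed from each non-empty bin
and re-allocated to a bin chosen independently and uniformly at random, then for any
`α > 0` the expected exponential potential after the round is at most
`Φ · e^{-α} · e^{((e^α - 1)/n)·κ} + (n - κ) · e^{((e^α - 1)/n)·κ}`. -/
theorem rbb_exp_potential_one_round
    (n m : ℕ) (hn : 1 ≤ n) (hm : n ≤ m)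
    (x : Fin n → ℕ) (hx : (∑ i, x i) = m)
    (Ω : Type) [MeasurableSpace Ω] (P : Measure Ω) [IsProbabilityMeasure P]
    (Z : Fin (kappa x) → Ω → Fin n)
    (hmeas : ∀ j, Measurable (Z j))
    (hindep : iIndepFun Z P)
    (hunif : ∀ j i, P {ω | Z j ω = i} = (n : ℝ≥0∞)⁻¹)
    (α : ℝ) (hα : 0 < α) :
    (∫ ω, (∑ i, Real.exp (α * ((x i - (if 0 < x i then 1 else 0)
        + (Finset.univ.filter fun j => Z j ω = i).card : ℕ) : ℝ))) ∂P)
      ≤ (∑ i, Real.exp (α * (x i : ℝ))) * Real.exp (-α)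
          * Real.exp ((Real.exp α - 1) / n * (kappa x : ℝ))
        + ((n - kappa x : ℕ) : ℝ) * Real.exp ((Real.exp α - 1) / n * (kappa x : ℝ)) :=
  rbb_exp_potential_one_round_general n x Ω P Z hmeas hindep hunif α
end

section
/- Consider the RBB process with n bins and m balls where m ≤ n/e². There exists n_0 such that for all n ≥ n_0, every initial load vector, and every round t ≥ 2m, the probability that max_{i∈[n]} x_i^t ≤ 4 · log n / log(n/(e·m)) is at least 1 − n^{−2}. -/
/-!
Each bin is a discrete-time queue served at rate one: its load at time `t` exceeds `K` only if,
for some `s < t`, it received at least `t - s + K` balls during `[s, t)`, or it was never empty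
and received at least `t - m + K + 1` balls during `[0, t)`. Since at most `m` bins are non-empty,
the balls received by bin `i` during `[s, t)` come from the `(t - s) * m` choices `Z u j` with
`s ≤ u < t`, `j < m`, each of which is `i` independently with probability `1 / n`. A union bound
over subsets of these choices bounds both events by powers of `a = e m / n ≤ 1 / e`, where
`t ≥ 2 m` pays for the `t - m` time steps in the second event; summing over `s` and over the
bins gives `2 n a ^ K`, which is at most `n⁻²` for `K = ⌊4 log n / log (1 / a)⌋`.
-/

open MeasureTheory ProbabilityTheory Finset
open scoped ENNReal

/-- One round of the repeated balls-into-bins (RBB) process: one ball is removed from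
each non-empty bin and these `kappa x` balls are re-allocated according to the first
`kappa x` of the bin choices `z : Fin n → Fin n`. -/
def rbbStep {n : ℕ} (x : Fin n → ℕ) (z : Fin n → Fin n) (i : Fin n) : ℕ :=
  x i - (if 0 < x i then 1 else 0)
    + (Finset.univ.filter fun j : Fin n => (j : ℕ) < kappa x ∧ z j = i).card

/-- The RBB load vector trajectory started from the load vector `x0`. -/
def rbb {n : ℕ} (x0 : Fin n → ℕ) (Z : ℕ → Fin n → Fin n) : ℕ → Fin n → ℕ
  | 0 => x0
  | t + 1 => rbbStep (rbb x0 Z t) (Z t)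

theorem queue_le_of_sum_Ico_lt {x h : ℕ → ℕ}
    (hx : ∀ u, x (u + 1) = x u - (if 0 < x u then 1 else 0) + h u) {t K : ℕ}
    (hwin : ∀ s < t, ∑ u ∈ Ico s t, h u < t - s + K)
    (hstart : x 0 + ∑ u ∈ range t, h u ≤ t + K) : x t ≤ K := by
  induction t generalizing K with
  | zero => simpa using hstart
  | succ t ih =>
    have hlast : h t ≤ K := by
      have := hwin t t.lt_succ_self
      rw [Nat.Ico_succ_singleton, sum_singleton] at this
      omega
    have hprev : x t ≤ K + 1 - h t := by
      refine ih (fun s hs => ?_) ?_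
      · have := hwin s (by omega)
        rw [sum_Ico_succ_top hs.le] at this
        omega
      · rw [sum_range_succ] at hstart
        omega
    rw [hx]
    split_ifs <;> omega

section Deterministic

variable {n : ℕ}

lemma kappa_le_sum (x : Fin n → ℕ) : kappa x ≤ ∑ i, x i := by
  rw [kappa, card_filter]
  exact sum_le_sum fun i _ => by split_ifs <;> omega

lemma sum_rbbStep (x : Fin n → ℕ) (z : Fin n → Fin n) : ∑ i, rbbStep x z i = ∑ i, x i := by
  have hout : ∑ i, (x i - if 0 < x i then 1 else 0) = ∑ i, x i - kappa x := by
    rw [sum_tsub_distrib _ fun i _ => by split_ifs <;> omega, kappa, card_filter]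
  have hin : ∑ i, #{j : Fin n | (j : ℕ) < kappa x ∧ z j = i} = kappa x := by
    have hκ : kappa x ≤ n := (card_filter_le _ _).trans_eq (card_fin n)
    simp_rw [← filter_filter]
    rw [← card_eq_sum_card_fiberwise fun j _ => mem_univ (z j), Fin.card_filter_val_lt,
      min_eq_right hκ]
  simp only [rbbStep, sum_add_distrib, hout, hin]
  have := kappa_le_sum x
  omega

lemma sum_rbb (x0 : Fin n → ℕ) (Z : ℕ → Fin n → Fin n) (t : ℕ) :
    ∑ i, rbb x0 Z t i = ∑ i, x0 i := by
  induction t with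
  | zero => rfl
  | succ t ih => rw [rbb, sum_rbbStep, ih]

def choiceWindow (n m s t : ℕ) : Finset (ℕ × Fin n) :=
  Ico s t ×ˢ ({j | (j : ℕ) < m} : Finset (Fin n))

lemma card_choiceWindow {m : ℕ} (hmn : m ≤ n) (s t : ℕ) :
    #(choiceWindow n m s t) = (t - s) * m := by
  rw [choiceWindow, card_product, Nat.card_Ico, Fin.card_filter_val_lt, min_eq_right hmn]

lemma sum_arrivals_le_card_choiceWindow {x0 : Fin n → ℕ} {m : ℕ} (hx0 : ∑ i, x0 i = m)
    (Z : ℕ → Fin n → Fin n) (i : Fin n) (s t : ℕ) :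
    ∑ u ∈ Ico s t, #{j : Fin n | (j : ℕ) < kappa (rbb x0 Z u) ∧ Z u j = i}
      ≤ #{p ∈ choiceWindow n m s t | Z p.1 p.2 = i} := by
  rw [card_filter, choiceWindow, sum_product]
  refine sum_le_sum fun u _ => ?_
  rw [← card_filter, filter_filter]
  refine card_le_card fun j hj => ?_
  have hκ : kappa (rbb x0 Z u) ≤ m := (kappa_le_sum _).trans_eq (by rw [sum_rbb, hx0])
  simp only [mem_filter, mem_univ, true_and] at hj ⊢
  exact ⟨by omega, hj.2⟩

theorem rbb_le_of_card_choiceWindow_lt {x0 : Fin n → ℕ} {m : ℕ} (hx0 : ∑ i, x0 i = m)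
    (Z : ℕ → Fin n → Fin n) (i : Fin n) {t K : ℕ}
    (hwin : ∀ s < t, #{p ∈ choiceWindow n m s t | Z p.1 p.2 = i} < t - s + K)
    (hstart : m + #{p ∈ choiceWindow n m 0 t | Z p.1 p.2 = i} ≤ t + K) :
    rbb x0 Z t i ≤ K := by
  refine queue_le_of_sum_Ico_lt (x := fun u => rbb x0 Z u i) (fun u => rfl)
    (fun s hs => (sum_arrivals_le_card_choiceWindow hx0 Z i s t).trans_lt (hwin s hs)) ?_
  have hxi : x0 i ≤ m := hx0 ▸ single_le_sum (fun _ _ => Nat.zero_le _) (mem_univ i)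
  have := sum_arrivals_le_card_choiceWindow hx0 Z i 0 t
  rw [range_eq_Ico]
  exact (add_le_add hxi this).trans hstart

end Deterministic

theorem measure_le_card_filter_le {Ω ι α : Type*} [MeasurableSpace Ω] {P : Measure Ω}
    [MeasurableSpace α] [MeasurableSingletonClass α] [DecidableEq α] {Y : ι → Ω → α}
    (hY : iIndepFun Y P) {a : α} {q : ℝ≥0∞} (hq : ∀ p, P {ω | Y p ω = a} ≤ q) (T : Finset ι) (k : ℕ) :
    P {ω | k ≤ #{p ∈ T | Y p ω = a}} ≤ (#T).choose k * q ^ k := by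
  have hcover : {ω | k ≤ #{p ∈ T | Y p ω = a}}
      ⊆ ⋃ S ∈ T.powersetCard k, ⋂ p ∈ S, {ω | Y p ω = a} := by
    intro ω hω
    obtain ⟨S, hST, hS⟩ := exists_subset_card_eq hω
    simp only [Set.mem_iUnion, Set.mem_iInter, mem_powersetCard]
    exact ⟨S, ⟨hST.trans (filter_subset _ _), hS⟩, fun p hp => (mem_filter.1 (hST hp)).2⟩
  calc P {ω | k ≤ #{p ∈ T | Y p ω = a}}
      ≤ ∑ S ∈ T.powersetCard k, P (⋂ p ∈ S, {ω | Y p ω = a}) :=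
        (measure_mono hcover).trans (measure_biUnion_finset_le _ _)
    _ ≤ ∑ S ∈ T.powersetCard k, q ^ k := by
        refine sum_le_sum fun S hS => ?_
        rw [hY.meas_biInter (s := fun p => {ω | Y p ω = a})
            fun p _ => ⟨{a}, measurableSet_singleton a, rfl⟩,
          ← (mem_powersetCard.1 hS).2, ← prod_const]
        exact prod_le_prod' fun p _ => hq p
    _ = (#T).choose k * q ^ k := by rw [sum_const, card_powersetCard, nsmul_eq_mul]

section Estimates

open Real

lemma choose_mul_inv_pow_le (N k : ℕ) {x : ℝ} (hx : 0 < x) :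
    (N.choose k : ℝ) * x⁻¹ ^ k ≤ (exp 1 * N / (k * x)) ^ k := by
  have hfac : (k : ℝ) ^ k / k.factorial ≤ exp 1 ^ k := by
    rw [← exp_nat_mul, mul_one]
    exact pow_div_factorial_le_exp _ k.cast_nonneg k
  calc (N.choose k : ℝ) * x⁻¹ ^ k ≤ N ^ k / k.factorial * x⁻¹ ^ k := by
        gcongr
        exact Nat.choose_le_pow_div k N
    _ = (N / (k * x)) ^ k * ((k : ℝ) ^ k / k.factorial) := by
        rw [div_pow, mul_pow, inv_pow]
        field_simp
    _ ≤ (N / (k * x)) ^ k * exp 1 ^ k := by gcongr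
    _ = (exp 1 * N / (k * x)) ^ k := by rw [← mul_pow]; ring

lemma choose_mul_inv_pow_le_pow {w m k n : ℕ} (hwk : w ≤ k) (hn : 0 < n) :
    ((w * m).choose k : ℝ) * (n : ℝ)⁻¹ ^ k ≤ (exp 1 * m / n) ^ k := by
  refine (choose_mul_inv_pow_le _ _ (by positivity)).trans (pow_le_pow_left₀ (by positivity) ?_ k)
  calc exp 1 * ((w * m : ℕ) : ℝ) / (k * n) = exp 1 * m / n * (w / k) := by push_cast; ring
    _ ≤ exp 1 * m / n * 1 := by
        gcongr
        exact div_le_one_of_le₀ (by exact_mod_cast hwk) (by positivity)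
    _ = exp 1 * m / n := mul_one _

lemma div_pow_le_exp_sub {N : ℝ} (hN : 0 ≤ N) (k : ℕ) : (N / k) ^ k ≤ exp (N - k) := by
  rcases Nat.eq_zero_or_pos k with rfl | hk
  · simpa using hN
  convert one_sub_div_pow_le_exp_neg (n := k) (t := k - N) (by linarith) using 2
  · field_simp
    ring
  · ring

lemma choose_mul_inv_pow_le_pow_succ {p m K n : ℕ} (hmp : m ≤ p) (hn : 0 < n)
    (ha : exp 1 * m / n ≤ exp (-1)) :
    (((p + m) * m).choose (p + K + 1) : ℝ) * (n : ℝ)⁻¹ ^ (p + K + 1)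
      ≤ (exp 1 * m / n) ^ (K + 1) := by
  set a := exp 1 * m / n
  have ha0 : 0 ≤ a := by positivity
  have hap : a ^ p ≤ exp (-p) := by
    calc a ^ p ≤ exp (-1) ^ p := pow_le_pow_left₀ ha0 ha p
      _ = exp (-p) := by rw [← exp_nat_mul]; ring_nf
  have hexp : exp (-p) * exp ((p + m : ℕ) - (p + K + 1 : ℕ)) ≤ 1 := by
    rw [← exp_add, exp_le_one_iff]
    have : (m : ℝ) ≤ p := by exact_mod_cast hmp
    push_cast
    linarith [(K.cast_nonneg : (0 : ℝ) ≤ K)]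
  calc (((p + m) * m).choose (p + K + 1) : ℝ) * (n : ℝ)⁻¹ ^ (p + K + 1)
      ≤ (exp 1 * ((p + m) * m : ℕ) / ((p + K + 1 : ℕ) * n)) ^ (p + K + 1) :=
        choose_mul_inv_pow_le _ _ (by positivity)
    _ = a ^ (K + 1) * a ^ p * (((p + m : ℕ) : ℝ) / (p + K + 1 : ℕ)) ^ (p + K + 1) := by
        rw [← pow_add, show K + 1 + p = p + K + 1 by ring, ← mul_pow]
        congr 1
        simp only [a, Nat.cast_mul]
        ring
    _ ≤ a ^ (K + 1) * exp (-p) * exp ((p + m : ℕ) - (p + K + 1 : ℕ)) := by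
        gcongr
        exact div_pow_le_exp_sub (by positivity) _
    _ ≤ a ^ (K + 1) := by
        rw [mul_assoc]
        exact mul_le_of_le_one_right (by positivity) hexp

lemma sum_range_pow_sub_le_one {a : ℝ} (ha0 : 0 ≤ a) (ha : a ≤ 2⁻¹) (t : ℕ) :
    ∑ s ∈ range t, a ^ (t - s) ≤ 1 := by
  rw [← sum_range_reflect]
  calc ∑ j ∈ range t, a ^ (t - (t - 1 - j)) = a * ∑ j ∈ Ico 0 t, a ^ j := by
        rw [mul_sum, range_eq_Ico]
        refine sum_congr rfl fun j hj => ?_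
        rw [← pow_succ']
        congr 1
        have := (mem_Ico.1 hj).2
        omega
    _ ≤ a * (a ^ 0 / (1 - a)) := by
        gcongr
        exact geom_sum_Ico_le_of_lt_one ha0 (by linarith)
    _ ≤ 1 := by
        rw [pow_zero, mul_one_div, div_le_one (by linarith)]
        linarith

lemma exp_one_mul_div_le_exp_neg_one {x y : ℝ} (hy : 0 < y) (h : x * exp 2 ≤ y) :
    exp 1 * x / y ≤ exp (-1) := by
  rw [div_le_iff₀ hy]
  calc exp 1 * x = exp (-1) * (x * exp 2) := by rw [mul_left_comm, ← exp_add]; norm_num [mul_comm]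
    _ ≤ exp (-1) * y := by gcongr

lemma exp_one_le_div_exp_one_mul {x y : ℝ} (hx : 0 < x) (h : x * exp 2 ≤ y) :
    exp 1 ≤ y / (exp 1 * x) := by
  rw [le_div_iff₀ (by positivity)]
  calc exp 1 * (exp 1 * x) = x * exp 2 := by rw [show (2 : ℝ) = 1 + 1 by norm_num, exp_add]; ring
    _ ≤ y := h

lemma le_pow_floor_log_div_log_add_one {b y : ℝ} (hb : 1 < b) (hy : 0 < y) :
    y ≤ b ^ (⌊log y / log b⌋₊ + 1) := by
  have hlogb : 0 < log b := log_pos hb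
  rw [← log_le_log_iff hy (by positivity), log_pow]
  have := Nat.lt_floor_add_one (log y / log b)
  rw [div_lt_iff₀ hlogb] at this
  push_cast
  linarith

lemma mul_two_mul_pow_floor_le {n m : ℕ} (hm : 1 ≤ m) (hmn : (m : ℝ) * exp 2 ≤ n) :
    (n : ℝ) * (2 * (exp 1 * m / n) ^ ⌊4 * log n / log (n / (exp 1 * m))⌋₊) ≤ 1 / n ^ 2 := by
  set b := (n : ℝ) / (exp 1 * m)
  set K := ⌊4 * log n / log b⌋₊
  have hm0 : (1 : ℝ) ≤ m := by exact_mod_cast hm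
  have hn0 : (0 : ℝ) < n := by nlinarith [exp_pos 2]
  have hb : exp 1 ≤ b := exp_one_le_div_exp_one_mul (by positivity) hmn
  have hb0 : 0 < b := (exp_pos 1).trans_le hb
  have he := exp_one_gt_two
  have hpow : (n : ℝ) ^ 4 ≤ b ^ (K + 1) := by
    have := le_pow_floor_log_div_log_add_one (by linarith) (pow_pos hn0 4) (b := b)
    rwa [log_pow, Nat.cast_ofNat] at this
  calc (n : ℝ) * (2 * (exp 1 * m / n) ^ K) = 2 * n * b / b ^ (K + 1) := by
        rw [show exp 1 * m / n = b⁻¹ from (inv_div _ _).symm, inv_pow, pow_succ]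
        field_simp
    _ ≤ 2 * n * b / n ^ 4 := by gcongr
    _ = 2 / (exp 1 * m) / n ^ 2 := by
        simp only [b]
        field_simp
    _ ≤ 1 / n ^ 2 := by
        gcongr
        rw [div_le_one (by positivity)]
        nlinarith

end Estimates

section Probability

open Real

variable {Ω : Type*} [MeasurableSpace Ω] {P : Measure Ω}

lemma ofReal_one_sub_le_prob_of_prob_compl_le [IsProbabilityMeasure P] {s : Set Ω} {q : ℝ}
    (hq : 0 ≤ q) (h : P sᶜ ≤ ENNReal.ofReal q) : ENNReal.ofReal (1 - q) ≤ P s := by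
  rw [ENNReal.ofReal_sub _ hq, ENNReal.ofReal_one, tsub_le_iff_right, ← measure_univ (μ := P)]
  exact (measure_univ_le_add_compl s).trans (add_le_add le_rfl h)

variable {n : ℕ} {Z : ℕ → Fin n → Ω → Fin n}

lemma measure_le_card_filter_choiceWindow_le
    (hind : iIndepFun (fun (p : ℕ × Fin n) ω => Z p.1 p.2 ω) P)
    (hunif : ∀ t j i, P {ω | Z t j ω = i} = (n : ℝ≥0∞)⁻¹) {m : ℕ} (hmn : m ≤ n) (i : Fin n)
    (s t k : ℕ) :
    P {ω | k ≤ #{p ∈ choiceWindow n m s t | Z p.1 p.2 ω = i}}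
      ≤ ENNReal.ofReal (((t - s) * m).choose k * (n : ℝ)⁻¹ ^ k) := by
  have hn : (0 : ℝ) < n := by exact_mod_cast i.pos
  refine (measure_le_card_filter_le hind (fun p => (hunif p.1 p.2 i).le) _ k).trans_eq ?_
  rw [card_choiceWindow hmn, ENNReal.ofReal_mul (by positivity), ENNReal.ofReal_pow (by positivity),
    ENNReal.ofReal_inv_of_pos hn, ENNReal.ofReal_natCast, ENNReal.ofReal_natCast]

theorem measure_rbb_gt_le (hind : iIndepFun (fun (p : ℕ × Fin n) ω => Z p.1 p.2 ω) P)
    (hunif : ∀ t j i, P {ω | Z t j ω = i} = (n : ℝ≥0∞)⁻¹) {m : ℕ} (hmn : (m : ℝ) * exp 2 ≤ n)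
    {x0 : Fin n → ℕ} (hx0 : ∑ i, x0 i = m) {t : ℕ} (ht : 2 * m ≤ t) (i : Fin n) (K : ℕ) :
    P {ω | K < rbb x0 (fun u j => Z u j ω) t i} ≤ ENNReal.ofReal (2 * (exp 1 * m / n) ^ K) := by
  set a := exp 1 * m / n
  set N := fun s ω => #{p ∈ choiceWindow n m s t | Z p.1 p.2 ω = i}
  have hn : 0 < n := i.pos
  have hm : m ≤ n := by
    have : (m : ℝ) ≤ m * exp 2 := le_mul_of_one_le_right (by positivity) (one_le_exp (by norm_num))
    exact_mod_cast this.trans hmn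
  have ha : a ≤ exp (-1) := exp_one_mul_div_le_exp_neg_one (by exact_mod_cast hn) hmn
  have ha2 : a ≤ 2⁻¹ := ha.trans (by linarith [exp_neg_one_lt_half])
  have hsub : {ω | K < rbb x0 (fun u j => Z u j ω) t i}
      ⊆ (⋃ s ∈ range t, {ω | t - s + K ≤ N s ω}) ∪ {ω | t - m + K + 1 ≤ N 0 ω} := by
    intro ω hω
    by_contra hgood
    simp only [N, Set.mem_union, Set.mem_iUnion, Set.mem_ofPred_eq, mem_range, not_or,
      not_exists, not_le] at hgood
    exact (rbb_le_of_card_choiceWindow_lt hx0 _ i hgood.1 (by omega)).not_gt hω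
  have hwin : ∀ s ∈ range t,
      P {ω | t - s + K ≤ N s ω} ≤ ENNReal.ofReal (a ^ (t - s) * a ^ K) := by
    intro s _
    refine (measure_le_card_filter_choiceWindow_le hind hunif hm i s t _).trans
      (ENNReal.ofReal_le_ofReal ?_)
    rw [← pow_add]
    exact choose_mul_inv_pow_le_pow (by omega) hn
  have hstart : P {ω | t - m + K + 1 ≤ N 0 ω} ≤ ENNReal.ofReal (a ^ K * a) := by
    refine (measure_le_card_filter_choiceWindow_le hind hunif hm i 0 t _).trans
      (ENNReal.ofReal_le_ofReal ?_)
    obtain ⟨p, rfl⟩ : ∃ p, t = p + m := ⟨t - m, by omega⟩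
    rw [← pow_succ, Nat.sub_zero, Nat.add_sub_cancel]
    exact choose_mul_inv_pow_le_pow_succ (by omega) hn ha
  have hgeom := sum_range_pow_sub_le_one (by positivity) ha2 t
  calc P {ω | K < rbb x0 (fun u j => Z u j ω) t i}
      ≤ ∑ s ∈ range t, P {ω | t - s + K ≤ N s ω} + P {ω | t - m + K + 1 ≤ N 0 ω} :=
        (measure_mono hsub).trans ((measure_union_le _ _).trans
          (add_le_add_left (measure_biUnion_finset_le _ _) _))
    _ ≤ ∑ s ∈ range t, ENNReal.ofReal (a ^ (t - s) * a ^ K) + ENNReal.ofReal (a ^ K * a) :=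
        add_le_add (sum_le_sum hwin) hstart
    _ = ENNReal.ofReal (a ^ K * (∑ s ∈ range t, a ^ (t - s) + a)) := by
        rw [← ENNReal.ofReal_sum_of_nonneg (fun _ _ => by positivity),
          ← ENNReal.ofReal_add (by positivity) (by positivity), ← sum_mul]
        ring_nf
    _ ≤ ENNReal.ofReal (2 * a ^ K) :=
        ENNReal.ofReal_le_ofReal (by nlinarith [pow_nonneg (by positivity : 0 ≤ a) K])

end Probability

/-- **Lemma 4.2 (lightly loaded case).** For the RBB process with `m ≤ n/e²` balls,
there is `n₀` such that for all `n ≥ n₀`, every initial load vector and every round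
`t ≥ 2m`, with probability at least `1 - n⁻²` the maximum load at round `t` is at most
`4·log n / log (n/(e·m))`. -/
theorem rbb_lightly_loaded_max_load :
    ∃ n0 : ℕ, ∀ n : ℕ, n0 ≤ n → ∀ m : ℕ, 1 ≤ m → (m : ℝ) ≤ (n : ℝ) / Real.exp 2 →
    ∀ (Ω : Type) [inst : MeasurableSpace Ω] (P : Measure Ω) [IsProbabilityMeasure P]
      (Z : ℕ → Fin n → Ω → Fin n),
      (∀ t j, Measurable (Z t j)) →
      iIndepFun (fun (p : ℕ × Fin n) ω => Z p.1 p.2 ω) P →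
      (∀ t j i, P {ω | Z t j ω = i} = (n : ℝ≥0∞)⁻¹) →
    ∀ x0 : Fin n → ℕ, (∑ i, x0 i) = m →
    ∀ t : ℕ, 2 * m ≤ t →
      P {ω | ∀ i : Fin n,
            (rbb x0 (fun u j => Z u j ω) t i : ℝ)
              ≤ 4 * Real.log n / Real.log ((n : ℝ) / (Real.exp 1 * m))}
        ≥ ENNReal.ofReal (1 - 1 / (n : ℝ) ^ 2) := by
  refine ⟨0, fun n _ m hm hmn Ω _ P _ Z _ hind hunif x0 hx0 t ht => ?_⟩
  rw [le_div_iff₀ (Real.exp_pos 2)] at hmn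
  set L := 4 * Real.log n / Real.log ((n : ℝ) / (Real.exp 1 * m))
  have hn : (1 : ℝ) ≤ n := by
    have : (1 : ℝ) ≤ m := by exact_mod_cast hm
    nlinarith [Real.add_one_le_exp 2]
  have hL : 0 ≤ L := div_nonneg (mul_nonneg zero_le_four (Real.log_nonneg hn)) (Real.log_nonneg
    ((Real.one_le_exp zero_le_one).trans (exp_one_le_div_exp_one_mul (by positivity) hmn)))
  have hbad : {ω | ∀ i : Fin n, (rbb x0 (fun u j => Z u j ω) t i : ℝ) ≤ L}ᶜ
      ⊆ ⋃ i, {ω | ⌊L⌋₊ < rbb x0 (fun u j => Z u j ω) t i} := by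
    intro ω hω
    simpa [Nat.floor_lt hL] using hω
  refine ofReal_one_sub_le_prob_of_prob_compl_le (by positivity) ((measure_mono hbad).trans ?_)
  calc _ ≤ ∑ i : Fin n, ENNReal.ofReal (2 * (Real.exp 1 * m / n) ^ ⌊L⌋₊) :=
        (measure_iUnion_fintype_le _ _).trans
          (sum_le_sum fun i _ => measure_rbb_gt_le hind hunif hmn hx0 ht i _)
    _ ≤ ENNReal.ofReal (1 / n ^ 2) := by
        rw [sum_const, card_univ, Fintype.card_fin, nsmul_eq_mul, ← ENNReal.ofReal_natCast,
          ← ENNReal.ofReal_mul (by positivity)]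
        exact ENNReal.ofReal_le_ofReal (mul_two_mul_pow_floor_le hm hmn)
end

section
/- Fix n ≥ 1 and any (deterministic) assignment of bins z_j^t ∈ [n] for j ∈ [n] and t ≥ t_0. Starting from the same load vector x^{t_0} = y^{t_0} : [n] → ℕ, define for t ≥ t_0: the RBB trajectory x_i^{t+1} := x_i^t − 1_{x_i^t > 0} + Σ_{j=1}^{κ^t} 1_{z_j^t = i}, where κ^t := |{i : x_i^t > 0}|, and the idealized trajectory y_i^{t+1} := y_i^t − 1_{y_i^t > 0} + Σ_{j=1}^{n} 1_{z_j^t = i}. Then for all rounds t ≥ t_0 and all bins i ∈ [n], x_i^t ≤ y_i^t. -/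
open Finset

/-- One round of the idealized process: one ball is removed from each non-empty bin and
exactly `n` balls are allocated, one according to each of the `n` bin choices. -/
def idealStep {n : ℕ} (y : Fin n → ℕ) (z : Fin n → Fin n) (i : Fin n) : ℕ :=
  y i - (if 0 < y i then 1 else 0) + (Finset.univ.filter fun j : Fin n => z j = i).card

/-- **Lemma 4.4 (coupling).** Running the RBB process and the idealized process from the
same load vector at round `t₀` with the same bin choices `z_j^t`, the idealized load of
every bin dominates the RBB load of that bin at every round `t ≥ t₀`. -/
theorem rbb_le_ideal_coupling
    (n : ℕ) (t0 : ℕ) (z : ℕ → Fin n → Fin n)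
    (x y : ℕ → Fin n → ℕ)
    (hinit : x t0 = y t0)
    (hx : ∀ t, t0 ≤ t → x (t + 1) = rbbStep (x t) (z t))
    (hy : ∀ t, t0 ≤ t → y (t + 1) = idealStep (y t) (z t)) :
    ∀ t, t0 ≤ t → ∀ i : Fin n, x t i ≤ y t i := by
  intro t ht
  induction t with
  | zero =>
    have : t0 = 0 := Nat.le_zero.mp ht
    subst this; simp [hinit]
  | succ t ih =>
    rcases Nat.lt_or_ge t0 (t+1) with h | h
    · have ht' : t0 ≤ t := Nat.lt_succ_iff.mp h
      have ihx := ih ht'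
      intro i
      rw [hx t ht', hy t ht']
      unfold rbbStep idealStep
      have hcard : (Finset.univ.filter fun j : Fin n => (j : ℕ) < kappa (x t) ∧ z t j = i).card
          ≤ (Finset.univ.filter fun j : Fin n => z t j = i).card := by
        apply Finset.card_le_card
        intro j hj
        simp only [Finset.mem_filter] at hj ⊢
        exact ⟨hj.1, hj.2.2⟩
      have h1 : x t i - (if 0 < x t i then 1 else 0) ≤ y t i - (if 0 < y t i then 1 else 0) := by
        have := ihx i
        by_cases hxi : 0 < x t i
        · have hyi : 0 < y t i := lt_of_lt_of_le hxi this
          simp [hxi, hyi]; omega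
        · simp [hxi]; omega
      omega
    · have : t0 = t+1 := Nat.le_antisymm ht h
      subst this; simp [hinit]
end

section
/- Let Z_1, …, Z_n be independent random variables, each uniformly distributed on [n] = {1,…,n}, and define the load of bin i as x_i := |{j ∈ [n] : Z_j = i}| and the quadratic potential Υ := Σ_{i=1}^n x_i². Then for every constant c > 0 there exists n_0 such that for all n ≥ n_0, the probability that Υ ≤ 3n is at least 1 − n^{−c}. -/
open MeasureTheory ProbabilityTheory Finset
open scoped ENNReal

/-!
Identify the outcome with a uniformly random map `f : Fin n → Fin n`; it suffices to show that at
most `n ^ (n - c)` maps have `Υ > 3n`. Since `Υ = n + 2 · #{colliding pairs}`, with `L = ⌊√n⌋`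
such a map either has a bin of load `> L`, which happens for at most `n ^ (n + 1) / (L + 1)!`
maps, or has at least `n` collisions when each ball's collisions with later balls are truncated
at `L`. For the latter, exposing the balls one at a time and bounding `exp` on `[0, L]` by its
chord gives `∑_f exp (t · truncated collisions) ≤ ∏_{j < n} (n + j (e^{tL} - 1) / L)`, and
Markov's inequality with `t = log 2 / L` bounds their number by
`n ^ n · exp (-(log 2 - 1/2) n / L)`. Both bounds are `n ^ n · exp (-Ω(√n))`.
-/

namespace BallsIntoBins

open Real Filter Topology

section Loads

variable {ι α : Type*} [Fintype ι] [DecidableEq α]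

def load (f : ι → α) (i : α) : ℕ := #{j | f j = i}

def quadraticPotential [Fintype α] (f : ι → α) : ℕ := ∑ i, load f i ^ 2

lemma sum_load [Fintype α] (f : ι → α) : ∑ i, load f i = Fintype.card ι :=
  (card_eq_sum_card_fiberwise fun j _ => mem_univ (f j)).symm

lemma load_cons {m : ℕ} (v : α) (g : Fin m → α) (i : α) :
    load (Fin.cons v g : Fin (m + 1) → α) i = load g i + if v = i then 1 else 0 := by
  simp only [load, card_filter, Fin.sum_univ_succ, Fin.cons_zero, Fin.cons_succ, add_comm]

end Loads

section Collisions

variable {α : Type*} [DecidableEq α] {m : ℕ}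

def laterCollisions (f : Fin m → α) (j : Fin m) : ℕ := #{k | j < k ∧ f k = f j}

def collisions (f : Fin m → α) : ℕ := ∑ j, laterCollisions f j

def truncCollisions (L : ℕ) (f : Fin m → α) : ℕ := ∑ j, min (laterCollisions f j) L

lemma laterCollisions_cons_zero (v : α) (g : Fin m → α) :
    laterCollisions (Fin.cons v g : Fin (m + 1) → α) 0 = load g v := by
  simp only [laterCollisions, load, card_filter, Fin.sum_univ_succ]
  simp [Fin.succ_pos]

lemma laterCollisions_cons_succ (v : α) (g : Fin m → α) (j : Fin m) :
    laterCollisions (Fin.cons v g : Fin (m + 1) → α) j.succ = laterCollisions g j := by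
  simp only [laterCollisions, card_filter, Fin.sum_univ_succ]
  simp

lemma collisions_cons (v : α) (g : Fin m → α) :
    collisions (Fin.cons v g : Fin (m + 1) → α) = load g v + collisions g := by
  simp only [collisions, Fin.sum_univ_succ, laterCollisions_cons_zero, laterCollisions_cons_succ]

lemma truncCollisions_cons (L : ℕ) (v : α) (g : Fin m → α) :
    truncCollisions L (Fin.cons v g : Fin (m + 1) → α)
      = min (load g v) L + truncCollisions L g := by
  simp only [truncCollisions, Fin.sum_univ_succ, laterCollisions_cons_zero,
    laterCollisions_cons_succ]

lemma laterCollisions_le_load (f : Fin m → α) (j : Fin m) :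
    laterCollisions f j ≤ load f (f j) :=
  card_le_card <| monotone_filter_right _ fun _ _ h => h.2

lemma quadraticPotential_eq [Fintype α] (f : Fin m → α) :
    quadraticPotential f = m + 2 * collisions f := by
  induction f using Fin.consInduction with
  | elim0 => simp [quadraticPotential, load, collisions]
  | cons v g ih =>
    have hsq : ∀ i, load (Fin.cons v g : Fin (_ + 1) → α) i ^ 2
        = load g i ^ 2 + if v = i then 2 * load g i + 1 else 0 := fun i => by
      rw [load_cons]; split_ifs <;> ring
    simp only [quadraticPotential, hsq, sum_add_distrib, sum_ite_eq, mem_univ, if_true,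
      collisions_cons] at ih ⊢
    rw [ih]
    ring

lemma quadraticPotential_eq_of_load_le [Fintype α] {L : ℕ} {f : Fin m → α}
    (h : ∀ i, load f i ≤ L) : quadraticPotential f = m + 2 * truncCollisions L f := by
  rw [quadraticPotential_eq, truncCollisions, collisions]
  congr 2
  exact sum_congr rfl fun j _ => (min_eq_left ((laterCollisions_le_load f j).trans (h _))).symm

end Collisions

section MomentGeneratingFunction

lemma exp_mul_le_one_add_of_le {t y L : ℝ} (ht : 0 ≤ t) (hy : 0 ≤ y) (hyL : y ≤ L) :
    exp (t * y) ≤ 1 + (exp (t * L) - 1) / L * y := by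
  rcases hy.eq_or_lt with rfl | hy
  · simp
  have hL : 0 < L := hy.trans_le hyL
  -- Bernoulli's inequality `(1 + s) ^ θ ≤ 1 + θ s` with `θ = y / L`
  have key := rpow_one_add_le_one_add_mul_self (s := exp (t * L) - 1)
    (by linarith [one_le_exp (mul_nonneg ht hL.le)]) (div_nonneg hy.le hL.le)
    ((div_le_one hL).2 hyL)
  rw [add_sub_cancel, ← exp_mul, mul_assoc, mul_div_cancel₀ _ hL.ne'] at key
  linarith [div_mul_eq_mul_div (exp (t * L) - 1) L y, mul_div_assoc (exp (t * L) - 1) y L]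

lemma prod_range_add_mul_le {N a : ℝ} (hN : 0 < N) (ha : 0 ≤ a) (m : ℕ) :
    ∏ j ∈ range m, (N + a * j) ≤ N ^ m * exp (a * m ^ 2 / (2 * N)) := by
  have hsum : ∑ j ∈ range m, (j : ℝ) ≤ m ^ 2 / 2 := by
    have h := sum_range_id_mul_two m
    have : (∑ j ∈ range m, j) * 2 ≤ m ^ 2 := h ▸ sq m ▸ Nat.mul_le_mul_left m (Nat.sub_le m 1)
    rw [le_div_iff₀ two_pos, ← Nat.cast_sum]
    exact_mod_cast this
  calc ∏ j ∈ range m, (N + a * j)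
      ≤ ∏ j ∈ range m, (N * exp (a / N * j)) := by
        refine prod_le_prod (fun j _ => by positivity) fun j _ => ?_
        have := add_one_le_exp (a / N * j)
        calc N + a * j = N * (a / N * j + 1) := by field_simp; ring
          _ ≤ N * exp (a / N * j) := by gcongr
    _ = N ^ m * exp (a / N * ∑ j ∈ range m, (j : ℝ)) := by
        rw [prod_mul_distrib, prod_const, card_range, mul_sum, exp_sum]
    _ ≤ N ^ m * exp (a * m ^ 2 / (2 * N)) := by
        gcongr
        calc a / N * ∑ j ∈ range m, (j : ℝ) ≤ a / N * (m ^ 2 / 2) := by gcongr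
          _ = a * m ^ 2 / (2 * N) := by field_simp

lemma card_le_mul_exp_le_sum_exp {β : Type*} [Fintype β] (g : β → ℝ) {t : ℝ} (ht : 0 ≤ t)
    (s : ℝ) : #{x | s ≤ g x} * exp (t * s) ≤ ∑ x, exp (t * g x) := by
  calc #{x | s ≤ g x} * exp (t * s) = #{x | s ≤ g x} • exp (t * s) := (nsmul_eq_mul _ _).symm
    _ ≤ ∑ x ∈ {x | s ≤ g x}, exp (t * g x) :=
        card_nsmul_le_sum _ _ _ fun x hx => by gcongr; exact (mem_filter.1 hx).2
    _ ≤ ∑ x, exp (t * g x) :=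
        sum_le_sum_of_subset_of_nonneg (subset_univ _) fun _ _ _ => (exp_pos _).le

variable {α : Type*} [Fintype α] [DecidableEq α]

lemma sum_exp_mul_min_load_le {ι : Type*} [Fintype ι] {t : ℝ} (ht : 0 ≤ t) (L : ℕ)
    (g : ι → α) :
    ∑ v, exp (t * min (load g v) L)
      ≤ Fintype.card α + (exp (t * L) - 1) / L * Fintype.card ι := by
  have ha : 0 ≤ (exp (t * L) - 1) / L :=
    div_nonneg (by linarith [one_le_exp (mul_nonneg ht L.cast_nonneg)]) L.cast_nonneg
  calc ∑ v, exp (t * min (load g v) L)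
      ≤ ∑ v, (1 + (exp (t * L) - 1) / L * load g v) := by
        refine sum_le_sum fun v _ => ?_
        push_cast
        refine (exp_mul_le_one_add_of_le ht (by positivity) (min_le_right _ _)).trans ?_
        gcongr
        exact min_le_left _ _
    _ = Fintype.card α + (exp (t * L) - 1) / L * Fintype.card ι := by
        rw [sum_add_distrib, ← mul_sum, ← Nat.cast_sum, sum_load]
        simp

lemma sum_exp_mul_truncCollisions_le {t : ℝ} (ht : 0 ≤ t) (L m : ℕ) :
    ∑ f : Fin m → α, exp (t * truncCollisions L f)
      ≤ ∏ j ∈ range m, (Fintype.card α + (exp (t * L) - 1) / L * j) := by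
  induction m with
  | zero => simp [truncCollisions]
  | succ m ih =>
    set a := (exp (t * L) - 1) / L
    have ha : 0 ≤ a :=
      div_nonneg (by linarith [one_le_exp (mul_nonneg ht L.cast_nonneg)]) L.cast_nonneg
    calc ∑ f : Fin (m + 1) → α, exp (t * truncCollisions L f)
        = ∑ g : Fin m → α, (∑ v, exp (t * min (load g v) L)) * exp (t * truncCollisions L g) := by
          rw [← (Fin.consEquiv fun _ => α).sum_comp, Fintype.sum_prod_type_right]
          refine sum_congr rfl fun g _ => ?_
          rw [sum_mul]
          refine sum_congr rfl fun v _ => ?_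
          change exp (t * truncCollisions L (Fin.cons v g : Fin (m + 1) → α)) = _
          rw [truncCollisions_cons, Nat.cast_add, mul_add, exp_add]
      _ ≤ ∑ g : Fin m → α, (Fintype.card α + a * m) * exp (t * truncCollisions L g) := by
          gcongr with g
          simpa using sum_exp_mul_min_load_le ht L g
      _ ≤ (Fintype.card α + a * m) * ∏ j ∈ range m, (Fintype.card α + a * j) := by
          rw [← mul_sum]
          gcongr
      _ = ∏ j ∈ range (m + 1), (Fintype.card α + a * j) := by
          rw [prod_range_succ, mul_comm]

lemma card_le_truncCollisions_le [Nonempty α] {L : ℕ} (hL : 0 < L) (m : ℕ) (s : ℝ) :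
    (#{f : Fin m → α | s ≤ truncCollisions L f} : ℝ)
      ≤ Fintype.card α ^ m * exp ((m ^ 2 / (2 * Fintype.card α) - s * log 2) / L) := by
  have hL' : (0 : ℝ) < L := Nat.cast_pos.2 hL
  have hN : (0 : ℝ) < Fintype.card α := Nat.cast_pos.2 Fintype.card_pos
  -- the choice `t = log 2 / L` turns the factor `(exp (t * L) - 1) / L` into `1 / L`
  have htL : exp (log 2 / L * L) = 2 := by rw [div_mul_cancel₀ _ hL'.ne', exp_log two_pos]
  have hmarkov := card_le_mul_exp_le_sum_exp (fun f : Fin m → α => (truncCollisions L f : ℝ))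
    (t := log 2 / L) (by positivity) s
  have hmgf := sum_exp_mul_truncCollisions_le (α := α) (t := log 2 / L) (by positivity) L m
  have hprod := prod_range_add_mul_le hN (a := 1 / L) (by positivity) m
  rw [htL, show ((2 : ℝ) - 1) = 1 by norm_num] at hmgf
  have := (hmarkov.trans hmgf).trans hprod
  rw [← le_div_iff₀ (exp_pos _), mul_div_assoc, ← exp_sub] at this
  refine this.trans_eq ?_
  congr 2
  ring

end MomentGeneratingFunction

section MaxLoad

variable {ι α : Type*} [Fintype ι] [DecidableEq ι] [Fintype α] [DecidableEq α]

lemma card_forall_mem_eq (T : Finset ι) (i : α) :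
    #{f : ι → α | ∀ j ∈ T, f j = i} = Fintype.card α ^ (Fintype.card ι - #T) := by
  have : ({f : ι → α | ∀ j ∈ T, f j = i} : Finset (ι → α))
      = Fintype.piFinset fun j => if j ∈ T then {i} else univ := by
    ext f
    simp only [mem_filter, mem_univ, true_and, Fintype.mem_piFinset]
    refine forall_congr' fun j => ?_
    split_ifs with hj <;> simp [hj]
  rw [this, Fintype.card_piFinset]
  simp only [apply_ite card, card_singleton, card_univ, prod_ite, prod_const_one, one_mul,
    prod_const, filter_not, card_sdiff]
  simp

lemma card_le_load_le (i : α) (K : ℕ) :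
    #{f : ι → α | K ≤ load f i}
      ≤ (Fintype.card ι).choose K * Fintype.card α ^ (Fintype.card ι - K) := by
  calc #{f : ι → α | K ≤ load f i}
      ≤ #((powersetCard K univ).biUnion fun T => {f : ι → α | ∀ j ∈ T, f j = i}) := by
        refine card_le_card fun f hf => ?_
        obtain ⟨T, hT, hTcard⟩ := exists_subset_card_eq (mem_filter.1 hf).2
        simp only [mem_biUnion, mem_powersetCard, mem_filter, mem_univ, true_and]
        exact ⟨T, ⟨subset_univ T, hTcard⟩, fun j hj => (mem_filter.1 (hT hj)).2⟩
    _ ≤ #(powersetCard K (univ : Finset ι)) * Fintype.card α ^ (Fintype.card ι - K) :=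
        card_biUnion_le_card_mul _ _ _ fun T hT => by
          rw [card_forall_mem_eq, (mem_powersetCard.1 hT).2]
    _ = _ := by rw [card_powersetCard, card_univ]

lemma card_exists_le_load_le (K : ℕ) :
    #{f : ι → α | ∃ i, K ≤ load f i}
      ≤ Fintype.card α * ((Fintype.card ι).choose K * Fintype.card α ^ (Fintype.card ι - K)) := by
  calc #{f : ι → α | ∃ i, K ≤ load f i}
      ≤ #((univ : Finset α).biUnion fun i => {f : ι → α | K ≤ load f i}) :=
        card_le_card fun f hf => by simpa using hf
    _ ≤ _ := card_biUnion_le_card_mul _ _ _ fun i _ => card_le_load_le i K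

end MaxLoad

lemma choose_mul_pow_sub_le_pow_div_factorial (n K : ℕ) :
    (n.choose K : ℝ) * n ^ (n - K) ≤ n ^ n / K.factorial := by
  rcases le_or_gt K n with hK | hK
  · calc (n.choose K : ℝ) * n ^ (n - K) ≤ n ^ K / K.factorial * n ^ (n - K) := by
          gcongr
          exact Nat.choose_le_pow_div K n
      _ = n ^ n / K.factorial := by rw [div_mul_eq_mul_div, ← pow_add, Nat.add_sub_cancel' hK]
  · rw [Nat.choose_eq_zero_of_lt hK, Nat.cast_zero, zero_mul]
    positivity

lemma card_exists_lt_load_le (n L : ℕ) :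
    (#{f : Fin n → Fin n | ∃ i, L < load f i} : ℝ) ≤ n * n ^ n / 2 ^ L := by
  have hfac : 2 ^ L ≤ (L + 1).factorial := by
    simpa [add_comm] using Nat.factorial_mul_pow_le_factorial (m := 1) (n := L)
  have hcount : #{f : Fin n → Fin n | ∃ i, L < load f i}
      ≤ n * (n.choose (L + 1) * n ^ (n - (L + 1))) := by
    convert card_exists_le_load_le (ι := Fin n) (α := Fin n) (L + 1) using 2 <;> simp
  calc (#{f : Fin n → Fin n | ∃ i, L < load f i} : ℝ)
      ≤ n * (n.choose (L + 1) * n ^ (n - (L + 1))) := by exact_mod_cast hcount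
    _ ≤ n * (n ^ n / (L + 1).factorial) := by
        gcongr
        exact choose_mul_pow_sub_le_pow_div_factorial n (L + 1)
    _ ≤ n * n ^ n / 2 ^ L := by
        rw [mul_div_assoc]
        gcongr
        exact_mod_cast hfac

lemma card_three_mul_lt_quadraticPotential_le {n L : ℕ} (hL : 0 < L) (hLn : L * L ≤ n) :
    (#{f : Fin n → Fin n | 3 * n < quadraticPotential f} : ℝ)
      ≤ (n + 1) * n ^ n * exp (-(log 2 - 1 / 2) * L) := by
  have hn : 0 < n := lt_of_lt_of_le (Nat.mul_pos hL hL) hLn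
  have : NeZero n := ⟨hn.ne'⟩
  have hL' : (0 : ℝ) < L := Nat.cast_pos.2 hL
  have hsub : ({f : Fin n → Fin n | 3 * n < quadraticPotential f} : Finset _)
      ⊆ ({f | (n : ℝ) ≤ truncCollisions L f} : Finset _)
        ∪ ({f | ∃ i, L < load f i} : Finset _) := by
    intro f hf
    by_cases hmax : ∃ i, L < load f i
    · exact mem_union_right _ (mem_filter.2 ⟨mem_univ f, hmax⟩)
    · simp only [not_exists, not_lt] at hmax
      have h := (mem_filter.1 hf).2
      rw [quadraticPotential_eq_of_load_le hmax] at h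
      have : n ≤ truncCollisions L f := by omega
      exact mem_union_left _ (mem_filter.2 ⟨mem_univ f, by exact_mod_cast this⟩)
  have hcollide : (#{f : Fin n → Fin n | (n : ℝ) ≤ truncCollisions L f} : ℝ)
      ≤ n ^ n * exp (-(log 2 - 1 / 2) * L) := by
    refine (card_le_truncCollisions_le hL n n).trans ?_
    simp only [Fintype.card_fin]
    gcongr
    rw [div_le_iff₀ hL', show (n : ℝ) ^ 2 / (2 * n) = n / 2 by field_simp]
    have : (L : ℝ) * L ≤ n := by exact_mod_cast hLn
    nlinarith [log_two_gt_d9]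
  have hmax : (#{f : Fin n → Fin n | ∃ i, L < load f i} : ℝ)
      ≤ n * n ^ n * exp (-(log 2 - 1 / 2) * L) := by
    have h2L : ((2 : ℝ) ^ L)⁻¹ = exp (-log 2 * L) := by
      rw [neg_mul, exp_neg, mul_comm, exp_nat_mul, exp_log two_pos]
    refine (card_exists_lt_load_le n L).trans ?_
    rw [div_eq_mul_inv, h2L]
    gcongr
    linarith
  calc (#{f : Fin n → Fin n | 3 * n < quadraticPotential f} : ℝ)
      ≤ #{f : Fin n → Fin n | (n : ℝ) ≤ truncCollisions L f}
        + #{f : Fin n → Fin n | ∃ i, L < load f i} := by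
        exact_mod_cast (card_le_card hsub).trans (card_union_le _ _)
    _ ≤ (n + 1) * n ^ n * exp (-(log 2 - 1 / 2) * L) := by linarith

lemma eventually_add_one_mul_exp_neg_mul_sqrt_le {β : ℝ} (hβ : 0 < β) (c : ℝ) :
    ∀ᶠ n : ℕ in atTop, ((n : ℝ) + 1) * exp (-β * n.sqrt) ≤ (n : ℝ) ^ (-c) := by
  have hlim : Tendsto (fun n : ℕ => √(n : ℝ) ^ (2 * (c + 1)) * exp (-β * √(n : ℝ))) atTop (𝓝 0) :=
    (tendsto_rpow_mul_exp_neg_mul_atTop_nhds_zero _ _ hβ).comp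
      (tendsto_sqrt_atTop.comp tendsto_natCast_atTop_atTop)
  filter_upwards [hlim.eventually (ge_mem_nhds (by positivity : 0 < (2 * exp β)⁻¹)),
    eventually_ge_atTop 1] with n hsmall hn
  have hn' : (0 : ℝ) < n := by exact_mod_cast hn
  have hpow : √(n : ℝ) ^ (2 * (c + 1)) = n ^ (c + 1) := by
    rw [sqrt_eq_rpow, ← rpow_mul hn'.le]
    ring_nf
  have hsqrt : exp (-β * n.sqrt) ≤ exp β * exp (-β * √(n : ℝ)) := by
    rw [← exp_add]
    gcongr
    nlinarith [real_sqrt_lt_nat_sqrt_succ (a := n)]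
  have hsplit : (n : ℝ) = n ^ (-c) * n ^ (c + 1) := by
    rw [← rpow_add hn', neg_add_cancel_left, rpow_one]
  rw [hpow] at hsmall
  calc ((n : ℝ) + 1) * exp (-β * n.sqrt) ≤ (2 * n) * (exp β * exp (-β * √(n : ℝ))) := by
        gcongr
        linarith [(Nat.one_le_cast (α := ℝ)).2 hn]
    _ = n ^ (-c) * ((2 * exp β) * (n ^ (c + 1) * exp (-β * √(n : ℝ)))) := by
        nth_rw 1 [hsplit]; ring
    _ ≤ n ^ (-c) * ((2 * exp β) * (2 * exp β)⁻¹) := by gcongr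
    _ = n ^ (-c) := by rw [mul_inv_cancel₀ (by positivity), mul_one]

lemma measure_setOf_mem_eq_card_div {Ω ι α : Type*} [MeasurableSpace Ω] {P : Measure Ω}
    [Fintype ι] [Fintype α] [MeasurableSpace α] [MeasurableSingletonClass α] {Z : ι → Ω → α}
    (hZ : ∀ j, Measurable (Z j)) (hind : iIndepFun Z P)
    (hunif : ∀ j i, P {ω | Z j ω = i} = (Fintype.card α : ℝ≥0∞)⁻¹) (S : Finset (ι → α)) :
    P {ω | (fun j => Z j ω) ∈ S} = #S / Fintype.card α ^ Fintype.card ι := by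
  have hpt : ∀ f : ι → α,
      P ((fun ω j => Z j ω) ⁻¹' {f}) = ((Fintype.card α : ℝ≥0∞) ^ Fintype.card ι)⁻¹ := by
    intro f
    have : (fun ω j => Z j ω) ⁻¹' {f} = ⋂ j ∈ (univ : Finset ι), Z j ⁻¹' {f j} := by
      ext ω
      simp [funext_iff]
    rw [this, hind.measure_inter_preimage_eq_mul univ fun j _ => measurableSet_singleton _]
    simp only [Set.preimage, Set.mem_singleton_iff, hunif, prod_const, card_univ, ENNReal.inv_pow]
  change P ((fun ω j => Z j ω) ⁻¹' (S : Set (ι → α))) = _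
  rw [← sum_measure_preimage_singleton S
    fun f _ => measurable_pi_lambda _ hZ (measurableSet_singleton f)]
  simp [hpt, div_eq_mul_inv]

lemma eventually_card_three_mul_lt_quadraticPotential_le (c : ℝ) :
    ∀ᶠ n : ℕ in atTop,
      (#{f : Fin n → Fin n | 3 * n < quadraticPotential f} : ℝ) ≤ n ^ (-c) * n ^ n := by
  have hβ : 0 < log 2 - 1 / 2 := by linarith [log_two_gt_d9]
  filter_upwards [eventually_add_one_mul_exp_neg_mul_sqrt_le hβ c, eventually_ge_atTop 1]
    with n hsmall hn
  calc (#{f : Fin n → Fin n | 3 * n < quadraticPotential f} : ℝ)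
      ≤ (n + 1) * n ^ n * exp (-(log 2 - 1 / 2) * n.sqrt) :=
        card_three_mul_lt_quadraticPotential_le (Nat.sqrt_pos.2 hn) (Nat.sqrt_le n)
    _ ≤ n ^ (-c) * n ^ n := by rw [mul_right_comm]; gcongr

lemma ofReal_one_sub_le_card_filter_div {β : Type*} [Fintype β] [Nonempty β] (p : β → Prop)
    [DecidablePred p] {x : ℝ} (h : (#{b | ¬p b} : ℝ) ≤ x * Fintype.card β) :
    ENNReal.ofReal (1 - x) ≤ #{b | p b} / Fintype.card β := by
  have hcard : (0 : ℝ) < Fintype.card β := Nat.cast_pos.2 Fintype.card_pos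
  have hsplit : (#{b | p b} : ℝ) + #{b | ¬p b} = Fintype.card β := by
    exact_mod_cast card_filter_add_card_filter_not p
  rw [ENNReal.ofReal_le_iff_le_toReal (ENNReal.div_ne_top (ENNReal.natCast_ne_top _)
      (Nat.cast_ne_zero.2 Fintype.card_ne_zero)), ENNReal.toReal_div, ENNReal.toReal_natCast,
    ENNReal.toReal_natCast, le_div_iff₀ hcard]
  linarith

end BallsIntoBins

open BallsIntoBins Filter in
/-- **Lemma A.1 (OneChoice quadratic potential).** Allocate `n` balls into `n` bins,
each ball into a bin chosen independently and uniformly at random, and let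
`Υ = ∑_i x_i²` be the quadratic potential of the resulting load vector. Then for every
constant `c > 0` and all sufficiently large `n`, `Υ ≤ 3n` holds with probability at
least `1 - n^{-c}`. -/
theorem one_choice_quadratic_potential :
    ∀ c : ℝ, 0 < c →
    ∃ n0 : ℕ, ∀ n : ℕ, n0 ≤ n →
    ∀ (Ω : Type) [inst : MeasurableSpace Ω] (P : Measure Ω) [IsProbabilityMeasure P]
      (Z : Fin n → Ω → Fin n),
      (∀ j, Measurable (Z j)) →
      iIndepFun Z P →
      (∀ j i, P {ω | Z j ω = i} = (n : ℝ≥0∞)⁻¹) →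
      P {ω | (∑ i : Fin n, ((Finset.univ.filter fun j => Z j ω = i).card) ^ 2) ≤ 3 * n}
        ≥ ENNReal.ofReal (1 - (n : ℝ) ^ (-c)) := by
  intro c _
  obtain ⟨n0, hn0⟩ := eventually_atTop.1
    ((eventually_card_three_mul_lt_quadraticPotential_le c).and (eventually_ge_atTop 1))
  refine ⟨n0, fun n hn Ω _ P _ Z hZ hind hunif => ?_⟩
  obtain ⟨hbad, hn1⟩ := hn0 n hn
  have : NeZero n := ⟨by omega⟩
  have hprob := measure_setOf_mem_eq_card_div hZ hind (by simpa using hunif)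
    {f : Fin n → Fin n | quadraticPotential f ≤ 3 * n}
  rw [← Nat.cast_pow, ← Fintype.card_fun] at hprob
  change P {ω | quadraticPotential (fun j => Z j ω) ≤ 3 * n} ≥ _
  simp only [mem_filter, mem_univ, true_and] at hprob
  rw [hprob]
  exact ofReal_one_sub_le_card_filter_div _ (by simpa using hbad)
end
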